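/- arXiv:2402.16788 — 6 statements merged into one kernel-verified Lean document; each statement's English description precedes it below -/
import Mathlib

section
/- For all real numbers L and μ with L > μ > 0, every real step size η, and every natural number t, one has μ·(1−ηL)^{2t} + L·(1−ημ)^{2t} ≥ (μ+L)·((L−μ)/(L+μ))^{2t}. -/
/-!
Since `(1 - ηL)^(2t) = (ηL - 1)^(2t)` and `x ↦ x^(2t)` is convex, Jensen's inequality with
weights `μ` and `L` bounds the left side below by `(μ + L)` times the `2t`-th power of the weighted
mean `(μ(ηL - 1) + L(1 - ημ)) / (μ + L)`, in which `η` cancels and which equals `(L - μ)/(L + μ)`.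
-/

open Set

theorem ConvexOn.mul_map_div_le_add {s : Set ℝ} {f : ℝ → ℝ} (hf : ConvexOn ℝ s f)
    {x y : ℝ} (hx : x ∈ s) (hy : y ∈ s) {a b : ℝ} (ha : 0 ≤ a) (hb : 0 ≤ b) (hab : 0 < a + b) :
    (a + b) * f ((a * x + b * y) / (a + b)) ≤ a * f x + b * f y := by
  have jensen := (convexOn_iff_div.1 hf).2 hx hy ha hb hab
  simp only [smul_eq_mul] at jensen
  have hmean : a / (a + b) * x + b / (a + b) * y = (a * x + b * y) / (a + b) := by ring
  have hrhs : a / (a + b) * f x + b / (a + b) * f y = (a * f x + b * f y) / (a + b) := by ring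
  rw [hmean, hrhs, le_div_iff₀ hab] at jensen
  linarith

/-- For all real numbers `L` and `μ` with `L > μ > 0`, every real step size `η`,
and every natural number `t`, one has
`μ·(1−ηL)^(2t) + L·(1−ημ)^(2t) ≥ (μ+L)·((L−μ)/(L+μ))^(2t)`. -/
theorem gd_scalar_lower_bound (L μ : ℝ) (hLμ : L > μ) (hμ : μ > 0) (η : ℝ) (t : ℕ) :
    μ * (1 - η * L) ^ (2 * t) + L * (1 - η * μ) ^ (2 * t) ≥
      (μ + L) * ((L - μ) / (L + μ)) ^ (2 * t) := by
  have heven : Even (2 * t) := even_two_mul t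
  have hmean : (μ * (η * L - 1) + L * (1 - η * μ)) / (μ + L) = (L - μ) / (L + μ) := by
    rw [add_comm μ L]; congr 1; ring
  have jensen := heven.convexOn_pow.mul_map_div_le_add (mem_univ (η * L - 1))
    (mem_univ (1 - η * μ)) (a := μ) (b := L) hμ.le (by linarith) (by linarith)
  rw [hmean, ← neg_sub 1 (η * L), heven.neg_pow] at jensen
  exact jensen
end

section
/- Let L > μ > 0 and let t ≥ 1 be a natural number. The function g(η) = μ·(1−ηL)^{2t} + L·(1−ημ)^{2t} attains its global minimum over η ∈ ℝ at η = 2/(L+μ), and the minimum value equals (μ+L)·((L−μ)/(L+μ))^{2t}. -/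
/-!
With `x = 1 - ηL`, `y = 1 - ημ` the combination `L y - μ x = L - μ` does not depend on `η`.
Since `s ↦ s ^ (2t)` is even and convex, Jensen's inequality at `-x` and `y` with weights
proportional to `μ` and `L` gives `g η ≥ (μ + L) ((L - μ) / (L + μ)) ^ (2t)`, and at
`η = 2 / (L + μ)` one has `-x = y = (L - μ) / (L + μ)`, so the bound is attained.
-/

open Set

lemma ConvexOn.add_mul_map_div_le_of_even {f : ℝ → ℝ} (hf : ConvexOn ℝ univ f)
    (heven : Function.Even f) {a b : ℝ} (ha : 0 ≤ a) (hb : 0 ≤ b) (hab : 0 < a + b) (x y : ℝ) :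
    (a + b) * f ((b * y - a * x) / (a + b)) ≤ a * f x + b * f y := by
  have hjensen := hf.2 (mem_univ (-x)) (mem_univ y) (div_nonneg ha hab.le)
    (div_nonneg hb hab.le) (by field_simp)
  have hpoint : (a / (a + b)) • -x + (b / (a + b)) • y = (b * y - a * x) / (a + b) := by
    simp only [smul_eq_mul]; field_simp; ring
  rw [hpoint, heven, smul_eq_mul, smul_eq_mul] at hjensen
  calc (a + b) * f ((b * y - a * x) / (a + b))
      ≤ (a + b) * (a / (a + b) * f x + b / (a + b) * f y) := by gcongr
    _ = a * f x + b * f y := by field_simp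

theorem optimal_stepsize_for_gd_general
    (L μ : ℝ) (hLμ : L > μ) (hμ : μ > 0) (t : ℕ)
    (g : ℝ → ℝ) (hg : ∀ η, g η = μ * (1 - η * L) ^ (2 * t) + L * (1 - η * μ) ^ (2 * t)) :
    (∀ η : ℝ, g (2 / (L + μ)) ≤ g η) ∧
      g (2 / (L + μ)) = (μ + L) * ((L - μ) / (L + μ)) ^ (2 * t) := by
  have hL : 0 < L := hμ.trans hLμ
  have hsum : 0 < μ + L := by positivity
  have heven : Function.Even fun s : ℝ => s ^ (2 * t) := (even_two_mul t).neg_pow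
  have hopt : g (2 / (L + μ)) = (μ + L) * ((L - μ) / (L + μ)) ^ (2 * t) := by
    have hx : 1 - 2 / (L + μ) * L = -((L - μ) / (L + μ)) := by field_simp; ring
    have hy : 1 - 2 / (L + μ) * μ = (L - μ) / (L + μ) := by field_simp; ring
    rw [hg, hx, hy, (even_two_mul t).neg_pow]
    ring
  refine ⟨fun η => ?_, hopt⟩
  have hjensen := (even_two_mul t).convexOn_pow.add_mul_map_div_le_of_even heven hμ.le hL.le
    hsum (1 - η * L) (1 - η * μ)
  have hconst : (L * (1 - η * μ) - μ * (1 - η * L)) / (μ + L) = (L - μ) / (L + μ) := by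
    rw [add_comm μ L]; ring
  rw [hconst] at hjensen
  rw [hopt, hg]
  exact hjensen

/-- For `L > μ > 0` and a natural number `t ≥ 1`, the function
`g(η) = μ·(1−ηL)^(2t) + L·(1−ημ)^(2t)` attains its global minimum over `η ∈ ℝ`
at `η = 2/(L+μ)`, and the minimum value equals `(μ+L)·((L−μ)/(L+μ))^(2t)`. -/
theorem optimal_stepsize_for_gd
    (L μ : ℝ) (hLμ : L > μ) (hμ : μ > 0) (t : ℕ) (ht : 1 ≤ t)
    (g : ℝ → ℝ) (hg : ∀ η, g η = μ * (1 - η * L) ^ (2 * t) + L * (1 - η * μ) ^ (2 * t)) :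
    (∀ η : ℝ, g (2 / (L + μ)) ≤ g η) ∧
      g (2 / (L + μ)) = (μ + L) * ((L - μ) / (L + μ)) ^ (2 * t) :=
  optimal_stepsize_for_gd_general L μ hLμ hμ t g hg
end

section
/- Let H ∈ ℝ^{d×d} be symmetric positive definite with eigenvalues λ₁ ≥ λ₂ ≥ … ≥ λ_d > 0 and condition number κ = λ₁/λ_d. Let D ∈ ℝ^{d×d} be a diagonal matrix whose diagonal entries satisfy c₁·λ₁ ≤ D_{ii} ≤ c₂·λ₁ for all i, where 0 < c₁ ≤ c₂ are real constants, and let 0 < η ≤ c₁. Then for every w ∈ ℝ^d, the preconditioned gradient step w⁺ = w − η·D⁻¹Hw satisfies ½·(w⁺)ᵀH w⁺ ≤ (1 − η²/(c₂²·κ))·½·wᵀHw. -/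
/-!
Write `g = H w` and `S = gᵀ D⁻¹ g`. The step changes `wᵀ H w` by `-2ηS + η² (D⁻¹g)ᵀ H (D⁻¹g)`;
since `H ≤ λ₁` and `D ≥ c₁λ₁ ≥ ηλ₁` coordinatewise, the curvature term is at most `ηS`, so the
quadratic form drops by at least `ηS`. Since `D ≤ c₂λ₁` and `H² ≥ λ_d H`, we get
`S ≥ |g|² / (c₂λ₁) ≥ λ_d wᵀHw / (c₂λ₁)`, so `η ≤ c₂` gives `ηS ≥ η² / (c₂²κ) · wᵀHw`.
-/

open Matrix

namespace Matrix

variable {n : Type*} [Fintype n]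

lemma dotProduct_star_unitary_mulVec [DecidableEq n] (U : unitaryGroup n ℝ) (x y : n → ℝ) :
    (star (U : Matrix n n ℝ) *ᵥ x) ⬝ᵥ (star (U : Matrix n n ℝ) *ᵥ y) = x ⬝ᵥ y := by
  rw [star_eq_conjTranspose, conjTranspose_eq_transpose_of_trivial, mulVec_transpose,
    ← dotProduct_mulVec, mulVec_mulVec, ← conjTranspose_eq_transpose_of_trivial,
    ← star_eq_conjTranspose, Unitary.mul_star_self_of_mem U.2, one_mulVec]

lemma inv_diagonal_mulVec [DecidableEq n] {f : n → ℝ} (hf : ∀ i, f i ≠ 0) (g : n → ℝ) :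
    (diagonal f)⁻¹ *ᵥ g = fun i => g i / f i := by
  have hinv : (diagonal f)⁻¹ = diagonal f⁻¹ :=
    inv_eq_right_inv <| by
      rw [diagonal_mul_diagonal, ← diagonal_one]
      exact congrArg diagonal (funext fun i => mul_inv_cancel₀ (hf i))
  rw [hinv]
  exact funext fun i => by rw [mulVec_diagonal, Pi.inv_apply, inv_mul_eq_div]

lemma mul_dotProduct_self_le_dotProduct_inv_diagonal_mulVec [DecidableEq n] {f : n → ℝ} {c : ℝ}
    (hf : ∀ i, 0 < f i) (hc : ∀ i, c ≤ f i) (g : n → ℝ) :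
    c * (((diagonal f)⁻¹ *ᵥ g) ⬝ᵥ ((diagonal f)⁻¹ *ᵥ g)) ≤ g ⬝ᵥ ((diagonal f)⁻¹ *ᵥ g) := by
  rw [inv_diagonal_mulVec (fun i => (hf i).ne'), dotProduct, dotProduct, Finset.mul_sum]
  refine Finset.sum_le_sum fun i _ => ?_
  have hgi : g i * (g i / f i) = f i * (g i / f i * (g i / f i)) := by
    field_simp [(hf i).ne']
  rw [hgi]
  exact mul_le_mul_of_nonneg_right (hc i) (mul_self_nonneg _)

lemma dotProduct_self_le_mul_dotProduct_inv_diagonal_mulVec [DecidableEq n] {f : n → ℝ} {b : ℝ}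
    (hf : ∀ i, 0 < f i) (hb : ∀ i, f i ≤ b) (g : n → ℝ) :
    g ⬝ᵥ g ≤ b * (g ⬝ᵥ ((diagonal f)⁻¹ *ᵥ g)) := by
  rw [inv_diagonal_mulVec (fun i => (hf i).ne'), dotProduct, dotProduct, Finset.mul_sum]
  refine Finset.sum_le_sum fun i _ => ?_
  have hgi : g i * g i = f i * (g i * (g i / f i)) := by
    field_simp [(hf i).ne']
  have hterm : 0 ≤ g i * (g i / f i) := by
    rw [← mul_div_assoc]
    exact div_nonneg (mul_self_nonneg _) (hf i).le
  rw [hgi]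
  exact mul_le_mul_of_nonneg_right (hb i) hterm

namespace IsHermitian

variable {A : Matrix n n ℝ}

lemma star_eigenvectorUnitary_mulVec_mulVec [DecidableEq n] (hA : A.IsHermitian) (x : n → ℝ) :
    star (hA.eigenvectorUnitary : Matrix n n ℝ) *ᵥ (A *ᵥ x) =
      fun i => hA.eigenvalues i * (star (hA.eigenvectorUnitary : Matrix n n ℝ) *ᵥ x) i := by
  have h := hA.conjStarAlgAut_star_eigenvectorUnitary
  rw [Unitary.conjStarAlgAut_star_apply, RCLike.ofReal_real_eq_id, Function.id_comp] at h
  have hdiag : star (hA.eigenvectorUnitary : Matrix n n ℝ) * A =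
      diagonal hA.eigenvalues * star (hA.eigenvectorUnitary : Matrix n n ℝ) := by
    rw [← h, mul_assoc _ _ (star _), Unitary.mul_star_self_of_mem hA.eigenvectorUnitary.2,
      mul_one]
  rw [mulVec_mulVec, hdiag, ← mulVec_mulVec]
  exact funext (mulVec_diagonal _ _)

lemma dotProduct_mulVec_comm (hA : A.IsHermitian) (x y : n → ℝ) :
    x ⬝ᵥ (A *ᵥ y) = y ⬝ᵥ (A *ᵥ x) := by
  rw [dotProduct_mulVec, ← mulVec_transpose, ← conjTranspose_eq_transpose_of_trivial, hA.eq,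
    dotProduct_comm]

lemma dotProduct_mulVec_sub_smul (hA : A.IsHermitian) (x v : n → ℝ) (t : ℝ) :
    (x - t • v) ⬝ᵥ (A *ᵥ (x - t • v)) =
      x ⬝ᵥ (A *ᵥ x) - 2 * t * (v ⬝ᵥ (A *ᵥ x)) + t ^ 2 * (v ⬝ᵥ (A *ᵥ v)) := by
  simp only [mulVec_sub, mulVec_smul, sub_dotProduct, dotProduct_sub, smul_dotProduct,
    dotProduct_smul, smul_eq_mul, hA.dotProduct_mulVec_comm x v]
  ring

lemma dotProduct_mulVec_le [DecidableEq n] (hA : A.IsHermitian) {L : ℝ}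
    (hL : ∀ i, hA.eigenvalues i ≤ L) (x : n → ℝ) :
    x ⬝ᵥ (A *ᵥ x) ≤ L * (x ⬝ᵥ x) := by
  rw [← dotProduct_star_unitary_mulVec hA.eigenvectorUnitary,
    ← dotProduct_star_unitary_mulVec hA.eigenvectorUnitary x x,
    star_eigenvectorUnitary_mulVec_mulVec, dotProduct, dotProduct, Finset.mul_sum]
  refine Finset.sum_le_sum fun i _ => ?_
  set y := (star (hA.eigenvectorUnitary : Matrix n n ℝ) *ᵥ x) i
  have := mul_le_mul_of_nonneg_right (hL i) (mul_self_nonneg y)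
  linarith

lemma mul_dotProduct_mulVec_le [DecidableEq n] (hA : A.IsHermitian) {μ : ℝ} (hμ : 0 ≤ μ)
    (hμA : ∀ i, μ ≤ hA.eigenvalues i) (x : n → ℝ) :
    μ * (x ⬝ᵥ (A *ᵥ x)) ≤ (A *ᵥ x) ⬝ᵥ (A *ᵥ x) := by
  rw [← dotProduct_star_unitary_mulVec hA.eigenvectorUnitary,
    ← dotProduct_star_unitary_mulVec hA.eigenvectorUnitary (A *ᵥ x),
    star_eigenvectorUnitary_mulVec_mulVec, dotProduct, dotProduct, Finset.mul_sum]
  refine Finset.sum_le_sum fun i _ => ?_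
  set y := (star (hA.eigenvectorUnitary : Matrix n n ℝ) *ᵥ x) i
  have := mul_le_mul_of_nonneg_right (hμA i) (mul_nonneg (hμ.trans (hμA i)) (mul_self_nonneg y))
  linarith

theorem dotProduct_mulVec_preconditioned_step_le [DecidableEq n] (hA : A.IsHermitian) {L η : ℝ}
    (hL : ∀ i, hA.eigenvalues i ≤ L) {f : n → ℝ} (hf : ∀ i, 0 < f i) (hη : 0 ≤ η)
    (hηf : ∀ i, η * L ≤ f i) (x : n → ℝ) :
    (x - η • ((diagonal f)⁻¹ *ᵥ (A *ᵥ x))) ⬝ᵥ (A *ᵥ (x - η • ((diagonal f)⁻¹ *ᵥ (A *ᵥ x)))) ≤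
      x ⬝ᵥ (A *ᵥ x) - η * ((A *ᵥ x) ⬝ᵥ ((diagonal f)⁻¹ *ᵥ (A *ᵥ x))) := by
  set v := (diagonal f)⁻¹ *ᵥ (A *ᵥ x)
  have hcurv : η * (v ⬝ᵥ (A *ᵥ v)) ≤ (A *ᵥ x) ⬝ᵥ v := calc
    η * (v ⬝ᵥ (A *ᵥ v)) ≤ η * (L * (v ⬝ᵥ v)) := by gcongr; exact hA.dotProduct_mulVec_le hL v
    _ = η * L * (v ⬝ᵥ v) := by ring
    _ ≤ (A *ᵥ x) ⬝ᵥ v := mul_dotProduct_self_le_dotProduct_inv_diagonal_mulVec hf hηf _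
  rw [hA.dotProduct_mulVec_sub_smul, dotProduct_comm v]
  linarith [mul_le_mul_of_nonneg_left hcurv hη]

end IsHermitian

end Matrix

/-- Let `H ∈ ℝ^{d×d}` be symmetric positive definite with largest eigenvalue
`λ₁`, smallest eigenvalue `λ_d > 0`, and condition number `κ = λ₁/λ_d`. Let `D` be a
diagonal matrix with `c₁·λ₁ ≤ D_{ii} ≤ c₂·λ₁` for all `i` (`0 < c₁ ≤ c₂`), and let
`0 < η ≤ c₁`. Then for every `w`, the preconditioned gradient step
`w⁺ = w − η·D⁻¹Hw` satisfies `½(w⁺)ᵀHw⁺ ≤ (1 − η²/(c₂²·κ))·½wᵀHw`. -/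
theorem diagonal_preconditioned_step_contraction
    (d : ℕ) (hd : 0 < d)
    (H : Matrix (Fin d) (Fin d) ℝ) (hH : H.IsHermitian) (hpos : H.PosDef)
    (lam1 lamd : ℝ)
    (hlam1 : lam1 = Finset.univ.sup' (Finset.univ_nonempty_iff.mpr ⟨⟨0, hd⟩⟩) hH.eigenvalues)
    (hlamd : lamd = Finset.univ.inf' (Finset.univ_nonempty_iff.mpr ⟨⟨0, hd⟩⟩) hH.eigenvalues)
    (κ : ℝ) (hκ : κ = lam1 / lamd)
    (c₁ c₂ : ℝ) (hc₁ : 0 < c₁) (hc₁₂ : c₁ ≤ c₂)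
    (D : Matrix (Fin d) (Fin d) ℝ) (f : Fin d → ℝ) (hD : D = Matrix.diagonal f)
    (hDlb : ∀ i, c₁ * lam1 ≤ f i) (hDub : ∀ i, f i ≤ c₂ * lam1)
    (η : ℝ) (hη : 0 < η) (hηc : η ≤ c₁)
    (w wplus : Fin d → ℝ) (hwplus : wplus = w - η • (D⁻¹ *ᵥ (H *ᵥ w))) :
    (1 / 2) * (wplus ⬝ᵥ (H *ᵥ wplus)) ≤
      (1 - η ^ 2 / (c₂ ^ 2 * κ)) * ((1 / 2) * (w ⬝ᵥ (H *ᵥ w))) := by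
  have hlam_le : ∀ i, hH.eigenvalues i ≤ lam1 := fun i =>
    hlam1 ▸ Finset.le_sup' _ (Finset.mem_univ i)
  have hlam_ge : ∀ i, lamd ≤ hH.eigenvalues i := fun i =>
    hlamd ▸ Finset.inf'_le _ (Finset.mem_univ i)
  have hlamd_pos : 0 < lamd := hlamd ▸ (Finset.lt_inf'_iff _).mpr fun i _ => hpos.eigenvalues_pos i
  have hlam1_pos : 0 < lam1 := hlamd_pos.trans_le ((hlam_ge ⟨0, hd⟩).trans (hlam_le ⟨0, hd⟩))
  have hf : ∀ i, 0 < f i := fun i => (mul_pos hc₁ hlam1_pos).trans_le (hDlb i)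
  set Q := w ⬝ᵥ (H *ᵥ w)
  set S := (H *ᵥ w) ⬝ᵥ (D⁻¹ *ᵥ (H *ᵥ w))
  have hQ : 0 ≤ Q := by simpa using hpos.posSemidef.dotProduct_mulVec_nonneg w
  have hdescent : wplus ⬝ᵥ (H *ᵥ wplus) ≤ Q - η * S := by
    subst hwplus hD
    exact hH.dotProduct_mulVec_preconditioned_step_le hlam_le hf hη.le
      (fun i => (mul_le_mul_of_nonneg_right hηc hlam1_pos.le).trans (hDlb i)) w
  have hgrad : lamd * Q ≤ c₂ * lam1 * S := by
    subst hD
    exact (hH.mul_dotProduct_mulVec_le hlamd_pos.le hlam_ge w).trans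
      (dotProduct_self_le_mul_dotProduct_inv_diagonal_mulVec hf hDub _)
  have hc₂ : 0 < c₂ := hc₁.trans_le hc₁₂
  have hgain : η ^ 2 / (c₂ ^ 2 * κ) * Q ≤ η * S := calc
    η ^ 2 / (c₂ ^ 2 * κ) * Q = η / c₂ * (η * (lamd * Q / (c₂ * lam1))) := by
      rw [hκ]; field_simp
    _ ≤ 1 * (η * S) := by
      gcongr
      · exact (div_le_one hc₂).mpr (hηc.trans hc₁₂)
      · exact (div_le_iff₀ (by positivity)).mpr (by linarith)
    _ = η * S := one_mul _
  linarith
end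

section
/- Let d = d₁ + … + d_L and let H ∈ ℝ^{d×d} be block diagonal, H = diag(H₁, …, H_L), where each block H_l ∈ ℝ^{d_l×d_l} is symmetric positive definite with largest eigenvalue λ_{l,1} and condition number κ_l. Let h ∈ ℝ^d, let ℒ(w) = ½wᵀHw − hᵀw with minimum value ℒ*, and let w⁰ ∈ ℝ^d be such that every coordinate of g⁰ = Hw⁰ − h is nonzero. Define, for each block l, C_{l,1} = min_{i ∈ block l} |g⁰_i|/λ_{l,1} and C_{l,2} = max_{i ∈ block l} |g⁰_i|/λ_{l,1}, and set r = (max_l C_{l,2}²)/(min_l C_{l,1}²) and η = min_l C_{l,1}. Then the Adam iterates w^{t+1} = w^t − η·D⁻¹(Hw^t − h), where D = diag(|g⁰|) is the diagonal matrix with entries |g⁰_i|, satisfy for every natural number t: ℒ(w^{t+1}) − ℒ* ≤ max_{l ∈ [L]} (1 − 1/(r·κ_l)) · (ℒ(w^t) − ℒ*). -/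
open Matrix

section specbounds
variable {n : Type*} [Fintype n] [DecidableEq n]

lemma adamAux_quad_repr (A : Matrix n n ℝ) (hA : A.IsHermitian) (x : n → ℝ) :
    ∃ y : n → ℝ, x ⬝ᵥ (A *ᵥ x) = ∑ i, hA.eigenvalues i * y i ^ 2 ∧
      x ⬝ᵥ x = ∑ i, y i ^ 2 ∧
      (A *ᵥ x) ⬝ᵥ (A *ᵥ x) = ∑ i, (hA.eigenvalues i) ^ 2 * y i ^ 2 := by
  classical
  set U : Matrix n n ℝ := (hA.eigenvectorUnitary : Matrix n n ℝ) with hU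
  have hUs : star U * U = 1 := Unitary.coe_star_mul_self hA.eigenvectorUnitary
  have hsU : U * star U = 1 := Unitary.coe_mul_star_self hA.eigenvectorUnitary
  set y : n → ℝ := star U *ᵥ x with hy
  have key : ∀ z : n → ℝ, x ⬝ᵥ (U *ᵥ z) = y ⬝ᵥ z := by
    intro z
    rw [hy, dotProduct_mulVec, ← mulVec_transpose]
    rw [← conjTranspose_eq_transpose_of_trivial, ← Matrix.star_eq_conjTranspose]
  have hAx : A *ᵥ x = U *ᵥ (diagonal hA.eigenvalues *ᵥ y) := by
    conv_lhs => rw [hA.spectral_theorem]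
    simp only [Unitary.conjStarAlgAut_apply, Unitary.coe_star, ← hU, RCLike.ofReal_real_eq_id, Function.comp_def, id_eq, hy, ← mulVec_mulVec]
  refine ⟨y, ?_, ?_, ?_⟩
  · rw [hAx, key]
    simp [dotProduct, mulVec_diagonal, Finset.mul_sum]
    exact Finset.sum_congr rfl fun i _ => by ring
  · have : x ⬝ᵥ x = x ⬝ᵥ (U *ᵥ y) := by
      rw [hy, mulVec_mulVec, hsU, one_mulVec]
    rw [this, key]
    simp [dotProduct]
    exact Finset.sum_congr rfl fun i _ => by ring
  · rw [hAx]
    have h2 : ∀ z : n → ℝ, (U *ᵥ z) ⬝ᵥ (U *ᵥ z) = z ⬝ᵥ z := by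
      intro z
      rw [dotProduct_mulVec, ← mulVec_transpose, ← conjTranspose_eq_transpose_of_trivial,
        ← Matrix.star_eq_conjTranspose, mulVec_mulVec, hUs, one_mulVec]
    rw [h2]
    simp [dotProduct, mulVec_diagonal]
    exact Finset.sum_congr rfl fun i _ => by ring

lemma adamAux_quad_nonneg (A : Matrix n n ℝ) (hA : A.PosDef) (x : n → ℝ) :
    0 ≤ x ⬝ᵥ (A *ᵥ x) := by
  obtain ⟨y, h1, _, _⟩ := adamAux_quad_repr A hA.1 x
  rw [h1]
  exact Finset.sum_nonneg fun i _ =>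
    mul_nonneg (hA.eigenvalues_pos i).le (sq_nonneg _)

lemma adamAux_quad_le_sup (A : Matrix n n ℝ) (hA : A.IsHermitian)
    (hne : (Finset.univ : Finset n).Nonempty) (x : n → ℝ) :
    x ⬝ᵥ (A *ᵥ x) ≤ Finset.univ.sup' hne hA.eigenvalues * (x ⬝ᵥ x) := by
  obtain ⟨y, h1, h2, _⟩ := adamAux_quad_repr A hA x
  rw [h1, h2, Finset.mul_sum]
  exact Finset.sum_le_sum fun i _ =>
    mul_le_mul_of_nonneg_right (Finset.le_sup' _ (Finset.mem_univ i)) (sq_nonneg _)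

lemma adamAux_inf_quad_le (A : Matrix n n ℝ) (hA : A.PosDef)
    (hne : (Finset.univ : Finset n).Nonempty) (x : n → ℝ) :
    Finset.univ.inf' hne hA.1.eigenvalues * (x ⬝ᵥ (A *ᵥ x)) ≤ (A *ᵥ x) ⬝ᵥ (A *ᵥ x) := by
  obtain ⟨y, h1, _, h3⟩ := adamAux_quad_repr A hA.1 x
  rw [h1, h3, Finset.mul_sum]
  refine Finset.sum_le_sum fun i _ => ?_
  have h4 : Finset.univ.inf' hne hA.1.eigenvalues ≤ hA.1.eigenvalues i :=
    Finset.inf'_le _ (Finset.mem_univ i)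
  have h5 := (hA.eigenvalues_pos i).le
  calc Finset.univ.inf' hne hA.1.eigenvalues * (hA.1.eigenvalues i * y i ^ 2)
      ≤ hA.1.eigenvalues i * (hA.1.eigenvalues i * y i ^ 2) :=
        mul_le_mul_of_nonneg_right h4 (mul_nonneg h5 (sq_nonneg _))
    _ = hA.1.eigenvalues i ^ 2 * y i ^ 2 := by ring

end specbounds

section blocks
variable {L : Type*} [Fintype L] [DecidableEq L] {d : L → Type*}
  [∀ l, Fintype (d l)] [∀ l, DecidableEq (d l)]

set_option linter.unusedSectionVars false

lemma adamAux_dotProduct_sigma (x y : (Σ l, d l) → ℝ) :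
    x ⬝ᵥ y = ∑ l, (fun i => x ⟨l, i⟩) ⬝ᵥ (fun i => y ⟨l, i⟩) := by
  rw [dotProduct, ← Finset.univ_sigma_univ, Finset.sum_sigma]
  rfl

lemma adamAux_blockDiagonal'_mulVec_apply (M : ∀ l, Matrix (d l) (d l) ℝ)
    (x : (Σ l, d l) → ℝ) (l : L) (i : d l) :
    (blockDiagonal' M *ᵥ x) ⟨l, i⟩ = (M l *ᵥ fun j => x ⟨l, j⟩) i := by
  rw [mulVec, dotProduct, ← Finset.univ_sigma_univ, Finset.sum_sigma]
  rw [Finset.sum_eq_single l]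
  · simp only [blockDiagonal'_apply_eq]
    rfl
  · intro m _ hm
    refine Finset.sum_eq_zero fun j _ => ?_
    rw [blockDiagonal'_apply_ne M i j (Ne.symm hm), zero_mul]
  · intro hl
    exact absurd (Finset.mem_univ l) hl

end blocks

lemma adamAux_inv_diagonal {n : Type*} [Fintype n] [DecidableEq n] (v : n → ℝ)
    (hv : ∀ i, v i ≠ 0) :
    (Matrix.diagonal v)⁻¹ = Matrix.diagonal (fun i => (v i)⁻¹) := by
  apply Matrix.inv_eq_right_inv
  rw [diagonal_mul_diagonal]
  convert Matrix.diagonal_one with i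
  exact mul_inv_cancel₀ (hv i)

lemma adamAux_expand {n : Type*} [Fintype n] (A : Matrix n n ℝ) (a b : n → ℝ) (c : ℝ)
    (hsym : b ⬝ᵥ (A *ᵥ a) = a ⬝ᵥ (A *ᵥ b)) :
    (a - c • b) ⬝ᵥ (A *ᵥ (a - c • b)) =
      a ⬝ᵥ (A *ᵥ a) - 2 * c * (b ⬝ᵥ (A *ᵥ a)) + c ^ 2 * (b ⬝ᵥ (A *ᵥ b)) := by
  simp only [mulVec_sub, mulVec_smul, sub_dotProduct, dotProduct_sub, smul_dotProduct,
    dotProduct_smul, smul_eq_mul, hsym]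
  ring

set_option maxHeartbeats 1000000 in
/-- Theorem 1 of the paper, one-step form: Let `H = diag(H₁, …, H_L)` be block
diagonal with symmetric positive definite blocks `H_l` having largest eigenvalue `λ_{l,1}`
and condition number `κ_l`. Let `ℒ(w) = ½wᵀHw − hᵀw` with minimum value `ℒ*`, and let `w⁰`
be such that every coordinate of `g⁰ = Hw⁰ − h` is nonzero. With
`C_{l,1} = min_{i∈block l} |g⁰_i|/λ_{l,1}`, `C_{l,2} = max_{i∈block l} |g⁰_i|/λ_{l,1}`,
`r = (max_l C_{l,2}²)/(min_l C_{l,1}²)`, `η = min_l C_{l,1}`, the Adam iterates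
`w^{t+1} = w^t − η·D⁻¹(Hw^t − h)` with `D = diag(|g⁰|)` satisfy, for every `t`,
`ℒ(w^{t+1}) − ℒ* ≤ max_l (1 − 1/(r·κ_l)) · (ℒ(w^t) − ℒ*)`. -/
theorem adam_one_step_contraction_block_diagonal
    (L : ℕ) (hL : 0 < L) (dl : Fin L → ℕ) (hdl : ∀ l, 0 < dl l)
    (Hl : ∀ l, Matrix (Fin (dl l)) (Fin (dl l)) ℝ)
    (hHl : ∀ l, (Hl l).IsHermitian) (hpos : ∀ l, (Hl l).PosDef)
    (h : ((l : Fin L) × Fin (dl l)) → ℝ)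
    (lam1 κ : Fin L → ℝ)
    (hlam1 : ∀ l, lam1 l =
      Finset.univ.sup' (Finset.univ_nonempty_iff.mpr ⟨⟨0, hdl l⟩⟩) (hHl l).eigenvalues)
    (hκ : ∀ l, κ l = lam1 l /
      Finset.univ.inf' (Finset.univ_nonempty_iff.mpr ⟨⟨0, hdl l⟩⟩) (hHl l).eigenvalues)
    (calL : (((l : Fin L) × Fin (dl l)) → ℝ) → ℝ)
    (hcalL : ∀ u, calL u = (1 / 2) * (u ⬝ᵥ (Matrix.blockDiagonal' Hl *ᵥ u)) - h ⬝ᵥ u)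
    (Lstar : ℝ) (hLstar : Lstar = ⨅ u, calL u)
    (w0 g0 : ((l : Fin L) × Fin (dl l)) → ℝ)
    (hg0 : g0 = Matrix.blockDiagonal' Hl *ᵥ w0 - h)
    (hg0ne : ∀ i, g0 i ≠ 0)
    (C1 C2 : Fin L → ℝ)
    (hC1 : ∀ l, C1 l = Finset.univ.inf' (Finset.univ_nonempty_iff.mpr ⟨⟨0, hdl l⟩⟩)
      (fun i : Fin (dl l) => |g0 ⟨l, i⟩| / lam1 l))
    (hC2 : ∀ l, C2 l = Finset.univ.sup' (Finset.univ_nonempty_iff.mpr ⟨⟨0, hdl l⟩⟩)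
      (fun i : Fin (dl l) => |g0 ⟨l, i⟩| / lam1 l))
    (r η : ℝ)
    (hr : r = (Finset.univ.sup' (Finset.univ_nonempty_iff.mpr ⟨⟨0, hL⟩⟩) fun l => (C2 l) ^ 2) /
      (Finset.univ.inf' (Finset.univ_nonempty_iff.mpr ⟨⟨0, hL⟩⟩) fun l => (C1 l) ^ 2))
    (hη : η = Finset.univ.inf' (Finset.univ_nonempty_iff.mpr ⟨⟨0, hL⟩⟩) C1)
    (w : ℕ → ((l : Fin L) × Fin (dl l)) → ℝ) (hw0 : w 0 = w0)
    (hrec : ∀ t, w (t + 1) = w t -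
      η • ((Matrix.diagonal fun i => |g0 i|)⁻¹ *ᵥ (Matrix.blockDiagonal' Hl *ᵥ w t - h))) :
    ∀ t : ℕ, calL (w (t + 1)) - Lstar ≤
      (Finset.univ.sup' (Finset.univ_nonempty_iff.mpr ⟨⟨0, hL⟩⟩) fun l => 1 - 1 / (r * κ l)) *
        (calL (w t) - Lstar) := by
  classical
  -- basic nonemptiness
  have hneL : (Finset.univ : Finset (Fin L)).Nonempty :=
    Finset.univ_nonempty_iff.mpr ⟨⟨0, hL⟩⟩
  have hne : ∀ l : Fin L, (Finset.univ : Finset (Fin (dl l))).Nonempty :=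
    fun l => Finset.univ_nonempty_iff.mpr ⟨⟨0, hdl l⟩⟩
  set H : Matrix ((l : Fin L) × Fin (dl l)) ((l : Fin L) × Fin (dl l)) ℝ := Matrix.blockDiagonal' Hl with hH
  set lamin : Fin L → ℝ := fun l => Finset.univ.inf' (hne l) (hHl l).eigenvalues with hlamin
  set ρ : ℝ := Finset.univ.sup' hneL (fun l => 1 - 1 / (r * κ l)) with hρ
  -- positivity facts
  have hlamin_pos : ∀ l, 0 < lamin l := fun l =>
    (Finset.lt_inf'_iff _).mpr fun i _ => (hpos l).eigenvalues_pos i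
  have hlam1_pos : ∀ l, 0 < lam1 l := by
    intro l
    rw [hlam1 l]
    exact lt_of_lt_of_le ((hpos l).eigenvalues_pos (⟨0, hdl l⟩ : Fin (dl l)))
      (Finset.le_sup' _ (Finset.mem_univ (⟨0, hdl l⟩ : Fin (dl l))))
  have hlamin_le_lam1 : ∀ l, lamin l ≤ lam1 l := by
    intro l
    rw [hlam1 l]
    exact le_trans (Finset.inf'_le _ (Finset.mem_univ (⟨0, hdl l⟩ : Fin (dl l))))
      (Finset.le_sup' _ (Finset.mem_univ (⟨0, hdl l⟩ : Fin (dl l))))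
  have hκ_eq : ∀ l, κ l = lam1 l / lamin l := fun l => hκ l
  have hC1_pos : ∀ l, 0 < C1 l := by
    intro l
    rw [hC1 l]
    exact (Finset.lt_inf'_iff _).mpr fun i _ =>
      div_pos (abs_pos.mpr (hg0ne ⟨l, i⟩)) (hlam1_pos l)
  have hC1_le_C2 : ∀ l, C1 l ≤ C2 l := by
    intro l
    rw [hC1 l, hC2 l]
    exact le_trans (Finset.inf'_le (fun i : Fin (dl l) => |g0 ⟨l, i⟩| / lam1 l)
        (Finset.mem_univ (⟨0, hdl l⟩ : Fin (dl l))))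
      (Finset.le_sup' (fun i : Fin (dl l) => |g0 ⟨l, i⟩| / lam1 l)
        (Finset.mem_univ (⟨0, hdl l⟩ : Fin (dl l))))
  have hC2_pos : ∀ l, 0 < C2 l := fun l => lt_of_lt_of_le (hC1_pos l) (hC1_le_C2 l)
  have hη_pos : 0 < η := by
    rw [hη]
    exact (Finset.lt_inf'_iff _).mpr fun l _ => hC1_pos l
  have hη_le_C1 : ∀ l, η ≤ C1 l := by
    intro l
    rw [hη]
    exact Finset.inf'_le _ (Finset.mem_univ l)
  -- bounds relating g0, C1, C2, lam1
  have hC1_le : ∀ (l : Fin L) (i : Fin (dl l)), C1 l * lam1 l ≤ |g0 ⟨l, i⟩| := by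
    intro l i
    have h1 : C1 l ≤ |g0 ⟨l, i⟩| / lam1 l := by
      rw [hC1 l]; exact Finset.inf'_le _ (Finset.mem_univ i)
    calc C1 l * lam1 l ≤ (|g0 ⟨l, i⟩| / lam1 l) * lam1 l :=
          mul_le_mul_of_nonneg_right h1 (hlam1_pos l).le
      _ = |g0 ⟨l, i⟩| := div_mul_cancel₀ _ (hlam1_pos l).ne'
  have hC2_ge : ∀ (l : Fin L) (i : Fin (dl l)), |g0 ⟨l, i⟩| ≤ C2 l * lam1 l := by
    intro l i
    have h1 : |g0 ⟨l, i⟩| / lam1 l ≤ C2 l := by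
      rw [hC2 l]
      exact Finset.le_sup' (fun i : Fin (dl l) => |g0 ⟨l, i⟩| / lam1 l) (Finset.mem_univ i)
    calc |g0 ⟨l, i⟩| = (|g0 ⟨l, i⟩| / lam1 l) * lam1 l := (div_mul_cancel₀ _ (hlam1_pos l).ne').symm
      _ ≤ C2 l * lam1 l := mul_le_mul_of_nonneg_right h1 (hlam1_pos l).le
  -- r bounds
  have hr_ge : ∀ l, C2 l ≤ r * η := by
    intro l
    set A : ℝ := Finset.univ.sup' hneL (fun l => (C2 l) ^ 2) with hA
    set B : ℝ := Finset.univ.inf' hneL (fun l => (C1 l) ^ 2) with hB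
    have hB_pos : 0 < B :=
      (Finset.lt_inf'_iff _).mpr fun m _ => pow_pos (hC1_pos m) 2
    have hA_ge : C2 l ^ 2 ≤ A := Finset.le_sup' (fun m => (C2 m) ^ 2) (Finset.mem_univ l)
    have hB_le : B ≤ η ^ 2 := by
      obtain ⟨l0, _, hl0⟩ := Finset.exists_mem_eq_inf' hneL C1
      have hη0 : η = C1 l0 := by rw [hη, hl0]
      rw [hη0]
      exact Finset.inf'_le (fun m => (C1 m) ^ 2) (Finset.mem_univ l0)
    have hrB : r * B = A := by
      rw [hr]
      field_simp
    have hr0 : 0 ≤ r := by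
      rw [hr]
      exact div_nonneg (le_trans (sq_nonneg _) hA_ge) hB_pos.le
    have h1 : C2 l * η ≤ C2 l * C2 l :=
      mul_le_mul_of_nonneg_left (le_trans (hη_le_C1 l) (hC1_le_C2 l)) (hC2_pos l).le
    have h2 : C2 l * C2 l ≤ A := by nlinarith [hA_ge]
    have h3 : r * B ≤ r * η ^ 2 := mul_le_mul_of_nonneg_left hB_le hr0
    have h4 : C2 l * η ≤ (r * η) * η := by nlinarith
    exact le_of_mul_le_mul_right (by nlinarith) hη_pos
  have hr_pos : 0 < r := by
    have := hr_ge ⟨0, hL⟩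
    nlinarith [hC2_pos ⟨0, hL⟩, hη_pos]
  -- block symmetry of the quadratic form
  have symdot : ∀ (l : Fin L) (a b : Fin (dl l) → ℝ),
      a ⬝ᵥ (Hl l *ᵥ b) = b ⬝ᵥ (Hl l *ᵥ a) := by
    intro l a b
    rw [dotProduct_mulVec, ← mulVec_transpose, ← conjTranspose_eq_transpose_of_trivial,
      (hHl l), dotProduct_comm]
  have quadsplit : ∀ u v : ((l : Fin L) × Fin (dl l)) → ℝ, u ⬝ᵥ (H *ᵥ v) =
      ∑ l, (fun i => u ⟨l, i⟩) ⬝ᵥ (Hl l *ᵥ fun i => v ⟨l, i⟩) := by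
    intro u v
    rw [hH, adamAux_dotProduct_sigma]
    refine Finset.sum_congr rfl fun l _ => ?_
    congr 1
    funext i
    exact adamAux_blockDiagonal'_mulVec_apply Hl v l i
  have Hsymdot : ∀ u v : ((l : Fin L) × Fin (dl l)) → ℝ, u ⬝ᵥ (H *ᵥ v) = v ⬝ᵥ (H *ᵥ u) := by
    intro u v
    rw [quadsplit, quadsplit]
    exact Finset.sum_congr rfl fun l _ => symdot l _ _
  have Hquad_nonneg : ∀ u : ((l : Fin L) × Fin (dl l)) → ℝ, 0 ≤ u ⬝ᵥ (H *ᵥ u) := by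
    intro u
    rw [quadsplit]
    exact Finset.sum_nonneg fun l _ => adamAux_quad_nonneg _ (hpos l) _
  -- H is positive definite, hence invertible
  have blockpos : ∀ (l : Fin L) (a : Fin (dl l) → ℝ), a ≠ 0 → 0 < a ⬝ᵥ (Hl l *ᵥ a) := by
    intro l a ha
    have := (hpos l).dotProduct_mulVec_pos ha
    rwa [star_trivial] at this
  have HPD : H.PosDef := by
    refine Matrix.PosDef.of_dotProduct_mulVec_pos ?_ ?_
    · show Hᴴ = H
      rw [hH, Matrix.blockDiagonal'_conjTranspose]
      have : (fun k => (Hl k)ᴴ) = Hl := funext fun l => hHl l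
      rw [this]
    · intro x hx
      rw [star_trivial]
      rw [quadsplit]
      obtain ⟨p, hp⟩ := Function.ne_iff.mp hx
      refine Finset.sum_pos' (fun l _ => adamAux_quad_nonneg _ (hpos l) _) ⟨p.1,
        Finset.mem_univ _, ?_⟩
      refine blockpos p.1 _ (fun hzero => hp ?_)
      have := congrFun hzero p.2
      simpa using this
  obtain ⟨wstar, hHw⟩ : ∃ wstar : ((l : Fin L) × Fin (dl l)) → ℝ, H *ᵥ wstar = h := by
    refine ⟨H⁻¹ *ᵥ h, ?_⟩
    rw [mulVec_mulVec, Matrix.mul_nonsing_inv _ ((Matrix.isUnit_iff_isUnit_det _).mp HPD.isUnit),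
      one_mulVec]
  -- gap formula
  have hgap : ∀ u, calL u - calL wstar =
      (1 / 2) * ((u - wstar) ⬝ᵥ (H *ᵥ (u - wstar))) := by
    intro u
    have h1 : H *ᵥ (u - wstar) = H *ᵥ u - h := by rw [mulVec_sub, hHw]
    have h2 : wstar ⬝ᵥ (H *ᵥ u) = u ⬝ᵥ h := by rw [Hsymdot wstar u, hHw]
    have h3 : wstar ⬝ᵥ (H *ᵥ wstar) = wstar ⬝ᵥ h := by rw [hHw]
    rw [hcalL u, hcalL wstar, h1, sub_dotProduct, dotProduct_sub, dotProduct_sub, h2, h3,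
      dotProduct_comm h u, dotProduct_comm h wstar]
    ring
  have hLs : Lstar = calL wstar := by
    have hmin : ∀ u, calL wstar ≤ calL u := by
      intro u
      have := hgap u
      have h2 := Hquad_nonneg (u - wstar)
      linarith
    rw [hLstar]
    refine le_antisymm (ciInf_le ⟨calL wstar, ?_⟩ wstar) (le_ciInf hmin)
    rintro a ⟨u, rfl⟩
    exact hmin u
  -- the per-step contraction
  intro t
  set e : ((l : Fin L) × Fin (dl l)) → ℝ := w t - wstar with he
  set g : ((l : Fin L) × Fin (dl l)) → ℝ := H *ᵥ e with hg
  set v : ((l : Fin L) × Fin (dl l)) → ℝ := fun i => |g0 i|⁻¹ * g i with hv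
  have hDinv : (Matrix.diagonal fun i => |g0 i|)⁻¹ =
      Matrix.diagonal (fun i : (l : Fin L) × Fin (dl l) => |g0 i|⁻¹) :=
    adamAux_inv_diagonal _ (fun i => abs_ne_zero.mpr (hg0ne i))
  have hgt : H *ᵥ w t - h = g := by rw [hg, he, mulVec_sub, hHw]
  have hdv : (Matrix.diagonal fun i : (l : Fin L) × Fin (dl l) => |g0 i|⁻¹) *ᵥ g = v := by
    funext i
    rw [hv]
    exact mulVec_diagonal _ _ _
  have hwt1 : w (t + 1) - wstar = e - η • v := by
    rw [hrec t, hDinv, hgt, hdv, he]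
    exact sub_right_comm _ _ _
  rw [hLs, hgap (w (t + 1)), hgap (w t), hwt1, ← he]
  -- blockwise quantities
  set Qb : Fin L → ℝ := fun l => (fun i => e ⟨l, i⟩) ⬝ᵥ (Hl l *ᵥ fun i => e ⟨l, i⟩) with hQb
  set Sb : Fin L → ℝ := fun l => ∑ i, |g0 ⟨l, i⟩|⁻¹ * (g ⟨l, i⟩) ^ 2 with hSb
  set Tb : Fin L → ℝ := fun l => (fun i => v ⟨l, i⟩) ⬝ᵥ (Hl l *ᵥ fun i => v ⟨l, i⟩) with hTb
  have hgb : ∀ l, (fun i => g ⟨l, i⟩) = Hl l *ᵥ (fun i => e ⟨l, i⟩) := by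
    intro l
    funext i
    rw [hg, hH]
    exact adamAux_blockDiagonal'_mulVec_apply Hl e l i
  have hQ : e ⬝ᵥ (H *ᵥ e) = ∑ l, Qb l := quadsplit e e
  have hQb0 : ∀ l, 0 ≤ Qb l := fun l => adamAux_quad_nonneg _ (hpos l) _
  have hSb0 : ∀ l, 0 ≤ Sb l := by
    intro l
    simp only [hSb]
    exact Finset.sum_nonneg fun i _ => mul_nonneg (inv_nonneg.mpr (abs_nonneg _)) (sq_nonneg _)
  have hvdotg : ∀ l, (fun i => v ⟨l, i⟩) ⬝ᵥ (Hl l *ᵥ fun i => e ⟨l, i⟩) = Sb l := by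
    intro l
    rw [← hgb l]
    simp only [hSb, dotProduct]
    refine Finset.sum_congr rfl fun i _ => ?_
    rw [hv]
    ring
  have hexp : (e - η • v) ⬝ᵥ (H *ᵥ (e - η • v)) =
      ∑ l, (Qb l - 2 * η * Sb l + η ^ 2 * Tb l) := by
    rw [quadsplit]
    refine Finset.sum_congr rfl fun l _ => ?_
    have hsub : (fun i => (e - η • v) ⟨l, i⟩) = (fun i => e ⟨l, i⟩) - η • (fun i => v ⟨l, i⟩) := by
      funext i
      simp
    rw [hsub, adamAux_expand (Hl l) _ _ η (symdot l _ _), hvdotg l]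
  -- η * Tb l ≤ Sb l
  have hT : ∀ l, η * Tb l ≤ Sb l := by
    intro l
    have h1 : Tb l ≤ lam1 l * ((fun i => v ⟨l, i⟩) ⬝ᵥ (fun i => v ⟨l, i⟩)) := by
      rw [hlam1 l]
      exact adamAux_quad_le_sup (Hl l) (hHl l) (hne l) _
    have h2 : η * (lam1 l * ((fun i => v ⟨l, i⟩) ⬝ᵥ (fun i => v ⟨l, i⟩))) ≤ Sb l := by
      simp only [hSb, dotProduct, Finset.mul_sum]
      refine Finset.sum_le_sum fun i _ => ?_
      have hg0i : 0 < |g0 ⟨l, i⟩| := abs_pos.mpr (hg0ne _)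
      have heta1 : η * lam1 l ≤ |g0 ⟨l, i⟩| :=
        le_trans (mul_le_mul_of_nonneg_right (hη_le_C1 l) (hlam1_pos l).le) (hC1_le l i)
      have hveq : v ⟨l, i⟩ = |g0 ⟨l, i⟩|⁻¹ * g ⟨l, i⟩ := by rw [hv]
      rw [hveq]
      have hinv : |g0 ⟨l, i⟩| * |g0 ⟨l, i⟩|⁻¹ = 1 := mul_inv_cancel₀ hg0i.ne'
      have key : η * lam1 l * (|g0 ⟨l, i⟩|⁻¹ * |g0 ⟨l, i⟩|⁻¹) ≤ |g0 ⟨l, i⟩|⁻¹ := by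
        have h5 : η * lam1 l * (|g0 ⟨l, i⟩|⁻¹ * |g0 ⟨l, i⟩|⁻¹) ≤
            |g0 ⟨l, i⟩| * (|g0 ⟨l, i⟩|⁻¹ * |g0 ⟨l, i⟩|⁻¹) :=
          mul_le_mul_of_nonneg_right heta1 (by positivity)
        calc η * lam1 l * (|g0 ⟨l, i⟩|⁻¹ * |g0 ⟨l, i⟩|⁻¹) ≤
              |g0 ⟨l, i⟩| * (|g0 ⟨l, i⟩|⁻¹ * |g0 ⟨l, i⟩|⁻¹) := h5
          _ = (|g0 ⟨l, i⟩| * |g0 ⟨l, i⟩|⁻¹) * |g0 ⟨l, i⟩|⁻¹ := by ring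
          _ = |g0 ⟨l, i⟩|⁻¹ := by rw [hinv, one_mul]
      have h8 := mul_le_mul_of_nonneg_right key (sq_nonneg (g ⟨l, i⟩))
      calc η * (lam1 l * (|g0 ⟨l, i⟩|⁻¹ * g ⟨l, i⟩ * (|g0 ⟨l, i⟩|⁻¹ * g ⟨l, i⟩)))
          = η * lam1 l * (|g0 ⟨l, i⟩|⁻¹ * |g0 ⟨l, i⟩|⁻¹) * g ⟨l, i⟩ ^ 2 := by ring
        _ ≤ |g0 ⟨l, i⟩|⁻¹ * g ⟨l, i⟩ ^ 2 := h8
    linarith [mul_le_mul_of_nonneg_left h1 hη_pos.le, h2]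
  -- (1 - ρ) * Qb l ≤ η * Sb l
  have hQS : ∀ l, (1 - ρ) * Qb l ≤ η * Sb l := by
    intro l
    have hρl : 1 - 1 / (r * κ l) ≤ ρ := by
      rw [hρ]
      exact Finset.le_sup' (fun m => 1 - 1 / (r * κ m)) (Finset.mem_univ l)
    have hrκ : 1 / (r * κ l) = lamin l / (r * lam1 l) := by
      rw [hκ_eq l]
      field_simp
    have f3 : 1 - ρ ≤ lamin l / (r * lam1 l) := by
      rw [← hrκ]; linarith
    -- G = ‖g_l‖²
    set G : ℝ := (fun i => g ⟨l, i⟩) ⬝ᵥ (fun i => g ⟨l, i⟩) with hG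
    have hG0 : 0 ≤ G := by
      rw [hG, dotProduct]
      exact Finset.sum_nonneg fun i _ => mul_self_nonneg _
    have hglow : lamin l * Qb l ≤ G := by
      have := adamAux_inf_quad_le (Hl l) (hpos l) (hne l) (fun i => e ⟨l, i⟩)
      rw [hG, hgb l]
      exact this
    have hSlow : (C2 l * lam1 l)⁻¹ * G ≤ Sb l := by
      simp only [hG, hSb, dotProduct, Finset.mul_sum]
      refine Finset.sum_le_sum fun i _ => ?_
      have hg0i : 0 < |g0 ⟨l, i⟩| := abs_pos.mpr (hg0ne _)
      have hle : (C2 l * lam1 l)⁻¹ ≤ |g0 ⟨l, i⟩|⁻¹ :=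
        inv_anti₀ hg0i (hC2_ge l i)
      have h7 := mul_le_mul_of_nonneg_right hle (mul_self_nonneg (g ⟨l, i⟩))
      calc (C2 l * lam1 l)⁻¹ * (g ⟨l, i⟩ * g ⟨l, i⟩)
          ≤ |g0 ⟨l, i⟩|⁻¹ * (g ⟨l, i⟩ * g ⟨l, i⟩) := h7
        _ = |g0 ⟨l, i⟩|⁻¹ * g ⟨l, i⟩ ^ 2 := by ring
    have hC2lam_pos : 0 < C2 l * lam1 l := mul_pos (hC2_pos l) (hlam1_pos l)
    have f1 : lamin l * Qb l ≤ (C2 l * lam1 l) * Sb l := by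
      have := mul_le_mul_of_nonneg_left hSlow hC2lam_pos.le
      rw [← mul_assoc, mul_inv_cancel₀ hC2lam_pos.ne', one_mul] at this
      linarith
    have step1 : (1 - ρ) * Qb l ≤ (lamin l / (r * lam1 l)) * Qb l :=
      mul_le_mul_of_nonneg_right f3 (hQb0 l)
    have step2 : lamin l * Qb l ≤ (r * η * lam1 l) * Sb l := by
      have h6 : (C2 l * lam1 l) * Sb l ≤ (r * η * lam1 l) * Sb l := by
        have := mul_le_mul_of_nonneg_right
          (mul_le_mul_of_nonneg_right (hr_ge l) (hlam1_pos l).le) (hSb0 l)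
        linarith [this]
      linarith
    have step3 : (lamin l / (r * lam1 l)) * Qb l ≤ η * Sb l := by
      rw [div_mul_eq_mul_div, div_le_iff₀ (mul_pos hr_pos (hlam1_pos l))]
      calc lamin l * Qb l ≤ (r * η * lam1 l) * Sb l := step2
        _ = η * Sb l * (r * lam1 l) := by ring
    linarith
  -- final assembly
  have sum1 : ∑ l, (Qb l - 2 * η * Sb l + η ^ 2 * Tb l) ≤ ∑ l, (Qb l - η * Sb l) := by
    refine Finset.sum_le_sum fun l _ => ?_
    have h9 : η ^ 2 * Tb l ≤ η * Sb l := by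
      calc η ^ 2 * Tb l = η * (η * Tb l) := by ring
        _ ≤ η * Sb l := mul_le_mul_of_nonneg_left (hT l) hη_pos.le
    linarith
  have sum2 : ∑ l, (Qb l - η * Sb l) ≤ ∑ l, ρ * Qb l := by
    refine Finset.sum_le_sum fun l _ => ?_
    have := hQS l
    linarith
  have hfin : (e - η • v) ⬝ᵥ (H *ᵥ (e - η • v)) ≤ ρ * (e ⬝ᵥ (H *ᵥ e)) := by
    rw [hexp, hQ, Finset.mul_sum]
    exact le_trans sum1 sum2
  linarith
end

section
/- In the setting of the paper's Theorem 1 — H = diag(H₁, …, H_L) block diagonal with symmetric positive definite blocks H_l of largest eigenvalue λ_{l,1} and condition number κ_l; ℒ(w) = ½wᵀHw − hᵀw with minimum value ℒ*; g⁰ = Hw⁰ − h with all coordinates nonzero; C_{l,1} = min_{i ∈ block l} |g⁰_i|/λ_{l,1}, C_{l,2} = max_{i ∈ block l} |g⁰_i|/λ_{l,1}, r = (max_l C_{l,2}²)/(min_l C_{l,1}²), η = min_l C_{l,1}; iterates w^{t+1} = w^t − η·diag(|g⁰|)⁻¹(Hw^t − h) — one has for every natural number t: ℒ(w^t) − ℒ*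 ≤ (max_{l ∈ [L]} (1 − 1/(r·κ_l)))^t · (ℒ(w⁰) − ℒ*). In particular Adam with β₁ = 0, β₂ = 1 converges linearly at a rate governed by r·max_l κ_l. -/
open Matrix

section AdamHelpers
variable {n : Type*} [Fintype n] [DecidableEq n]

private lemma adam_quad_repr (A : Matrix n n ℝ) (hA : A.IsHermitian) (x : n → ℝ) :
    ∃ y : n → ℝ,
      x ⬝ᵥ (A *ᵥ x) = ∑ i, hA.eigenvalues i * y i ^ 2 ∧
      (A *ᵥ x) ⬝ᵥ (A *ᵥ x) = ∑ i, (hA.eigenvalues i) ^ 2 * y i ^ 2 ∧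
      x ⬝ᵥ x = ∑ i, y i ^ 2 := by
  set U : Matrix n n ℝ := (hA.eigenvectorUnitary : Matrix n n ℝ) with hUdef
  have hU1 : star U * U = 1 := Unitary.coe_star_mul_self _
  have hU2 : U * star U = 1 := Unitary.coe_mul_star_self _
  set y : n → ℝ := star U *ᵥ x with hy
  have hxy : U *ᵥ y = x := by
    rw [hy, mulVec_mulVec, hU2, one_mulVec]
  have orth : ∀ v w : n → ℝ, (U *ᵥ v) ⬝ᵥ (U *ᵥ w) = v ⬝ᵥ w := by
    intro v w
    rw [dotProduct_mulVec, ← mulVec_transpose, mulVec_mulVec]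
    have : Uᵀ * U = 1 := by
      have := hU1
      rwa [Matrix.star_eq_conjTranspose, conjTranspose_eq_transpose_of_trivial] at this
    rw [this, one_mulVec]
  have hAx : A *ᵥ x = U *ᵥ (diagonal hA.eigenvalues *ᵥ y) := by
    conv_lhs => rw [hA.spectral_theorem]
    simp only [RCLike.ofReal_real_eq_id, Function.comp_def, id_eq, Unitary.conjStarAlgAut_apply]
    rw [← mulVec_mulVec, ← mulVec_mulVec, hy]
  refine ⟨y, ?_, ?_, ?_⟩
  · rw [hAx, ← hxy, orth]
    simp only [dotProduct, mulVec_diagonal]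
    exact Finset.sum_congr rfl fun i _ => by ring
  · rw [hAx, orth]
    simp only [dotProduct, mulVec_diagonal]
    exact Finset.sum_congr rfl fun i _ => by ring
  · rw [← hxy, orth]
    simp only [dotProduct]
    exact Finset.sum_congr rfl fun i _ => by ring

private lemma adam_quad_le_sup (A : Matrix n n ℝ) (hA : A.IsHermitian) (b : ℝ)
    (hb : ∀ i, hA.eigenvalues i ≤ b) (x : n → ℝ) :
    x ⬝ᵥ (A *ᵥ x) ≤ b * (x ⬝ᵥ x) := by
  obtain ⟨y, h1, _, h3⟩ := adam_quad_repr A hA x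
  rw [h1, h3, Finset.mul_sum]
  exact Finset.sum_le_sum fun i _ => mul_le_mul_of_nonneg_right (hb i) (sq_nonneg _)

private lemma adam_quad_le_gradsq (A : Matrix n n ℝ) (hA : A.IsHermitian) (a : ℝ) (ha : 0 < a)
    (hb : ∀ i, a ≤ hA.eigenvalues i) (x : n → ℝ) :
    a * (x ⬝ᵥ (A *ᵥ x)) ≤ (A *ᵥ x) ⬝ᵥ (A *ᵥ x) := by
  obtain ⟨y, h1, h2, _⟩ := adam_quad_repr A hA x
  rw [h1, h2, Finset.mul_sum]
  refine Finset.sum_le_sum fun i _ => ?_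
  have h := hb i
  nlinarith [sq_nonneg (y i), mul_nonneg (sq_nonneg (y i)) ha.le, sq_nonneg (hA.eigenvalues i - a)]

private lemma adam_quad_nonneg (A : Matrix n n ℝ) (hA : A.IsHermitian)
    (hb : ∀ i, 0 ≤ hA.eigenvalues i) (x : n → ℝ) :
    0 ≤ x ⬝ᵥ (A *ᵥ x) := by
  obtain ⟨y, h1, _, _⟩ := adam_quad_repr A hA x
  rw [h1]
  exact Finset.sum_nonneg fun i _ => mul_nonneg (hb i) (sq_nonneg _)

private lemma adam_blockDiagonal'_mulVec_apply {L : ℕ} {dl : Fin L → ℕ}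
    (Hl : ∀ l, Matrix (Fin (dl l)) (Fin (dl l)) ℝ)
    (u : ((l : Fin L) × Fin (dl l)) → ℝ) (l : Fin L) (i : Fin (dl l)) :
    (blockDiagonal' Hl *ᵥ u) ⟨l, i⟩ = (Hl l *ᵥ fun j => u ⟨l, j⟩) i := by
  simp only [mulVec, dotProduct]
  rw [← Finset.univ_sigma_univ, Finset.sum_sigma]
  rw [Finset.sum_eq_single l]
  · refine Finset.sum_congr rfl fun j _ => ?_
    rw [blockDiagonal'_apply_eq]
  · intro k _ hk
    apply Finset.sum_eq_zero
    intro j _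
    rw [blockDiagonal'_apply_ne _ _ _ (Ne.symm hk), zero_mul]
  · intro hl; exact absurd (Finset.mem_univ l) hl

private lemma adam_dot_sigma {L : ℕ} {dl : Fin L → ℕ} (u v : ((l : Fin L) × Fin (dl l)) → ℝ) :
    u ⬝ᵥ v = ∑ l, (fun j => u ⟨l, j⟩) ⬝ᵥ (fun j => v ⟨l, j⟩) := by
  simp only [dotProduct]
  rw [← Finset.univ_sigma_univ, Finset.sum_sigma]

private lemma adam_scalar1 {lam s G : ℝ} (hls : lam * s ≤ 1) (hs : 0 ≤ s) :
    lam * (s * G * (s * G)) ≤ s * G * G := by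
  nlinarith [mul_nonneg hs (mul_self_nonneg G), mul_self_nonneg G]

end AdamHelpers


/-- Theorem 1 of the paper, iterated form: Let `H = diag(H₁, …, H_L)` be block
diagonal with symmetric positive definite blocks `H_l` having largest eigenvalue `λ_{l,1}`
and condition number `κ_l`. Let `ℒ(w) = ½wᵀHw − hᵀw` with minimum value `ℒ*`, and let `w⁰`
be such that every coordinate of `g⁰ = Hw⁰ − h` is nonzero. With
`C_{l,1} = min_{i∈block l} |g⁰_i|/λ_{l,1}`, `C_{l,2} = max_{i∈block l} |g⁰_i|/λ_{l,1}`,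
`r = (max_l C_{l,2}²)/(min_l C_{l,1}²)`, `η = min_l C_{l,1}`, the Adam iterates
`w^{t+1} = w^t − η·D⁻¹(Hw^t − h)` with `D = diag(|g⁰|)` satisfy, for every `t`,
`ℒ(w^t) − ℒ* ≤ (max_l (1 − 1/(r·κ_l)))^t · (ℒ(w⁰) − ℒ*)`: Adam with `β₁ = 0, β₂ = 1`
converges linearly at a rate governed by `r·max_l κ_l`. -/

theorem adam_linear_convergence_block_diagonal
    (L : ℕ) (hL : 0 < L) (dl : Fin L → ℕ) (hdl : ∀ l, 0 < dl l)
    (Hl : ∀ l, Matrix (Fin (dl l)) (Fin (dl l)) ℝ)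
    (hHl : ∀ l, (Hl l).IsHermitian) (hpos : ∀ l, (Hl l).PosDef)
    (h : ((l : Fin L) × Fin (dl l)) → ℝ)
    (lam1 κ : Fin L → ℝ)
    (hlam1 : ∀ l, lam1 l =
      Finset.univ.sup' (Finset.univ_nonempty_iff.mpr ⟨⟨0, hdl l⟩⟩) (hHl l).eigenvalues)
    (hκ : ∀ l, κ l = lam1 l /
      Finset.univ.inf' (Finset.univ_nonempty_iff.mpr ⟨⟨0, hdl l⟩⟩) (hHl l).eigenvalues)
    (calL : (((l : Fin L) × Fin (dl l)) → ℝ) → ℝ)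
    (hcalL : ∀ u, calL u = (1 / 2) * (u ⬝ᵥ (Matrix.blockDiagonal' Hl *ᵥ u)) - h ⬝ᵥ u)
    (Lstar : ℝ) (hLstar : Lstar = ⨅ u, calL u)
    (w0 g0 : ((l : Fin L) × Fin (dl l)) → ℝ)
    (hg0 : g0 = Matrix.blockDiagonal' Hl *ᵥ w0 - h)
    (hg0ne : ∀ i, g0 i ≠ 0)
    (C1 C2 : Fin L → ℝ)
    (hC1 : ∀ l, C1 l = Finset.univ.inf' (Finset.univ_nonempty_iff.mpr ⟨⟨0, hdl l⟩⟩)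
      (fun i : Fin (dl l) => |g0 ⟨l, i⟩| / lam1 l))
    (hC2 : ∀ l, C2 l = Finset.univ.sup' (Finset.univ_nonempty_iff.mpr ⟨⟨0, hdl l⟩⟩)
      (fun i : Fin (dl l) => |g0 ⟨l, i⟩| / lam1 l))
    (r η : ℝ)
    (hr : r = (Finset.univ.sup' (Finset.univ_nonempty_iff.mpr ⟨⟨0, hL⟩⟩) fun l => (C2 l) ^ 2) /
      (Finset.univ.inf' (Finset.univ_nonempty_iff.mpr ⟨⟨0, hL⟩⟩) fun l => (C1 l) ^ 2))
    (hη : η = Finset.univ.inf' (Finset.univ_nonempty_iff.mpr ⟨⟨0, hL⟩⟩) C1)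
    (w : ℕ → ((l : Fin L) × Fin (dl l)) → ℝ) (hw0 : w 0 = w0)
    (hrec : ∀ t, w (t + 1) = w t -
      η • ((Matrix.diagonal fun i => |g0 i|)⁻¹ *ᵥ (Matrix.blockDiagonal' Hl *ᵥ w t - h))) :
    ∀ t : ℕ, calL (w t) - Lstar ≤
      (Finset.univ.sup' (Finset.univ_nonempty_iff.mpr ⟨⟨0, hL⟩⟩) fun l => 1 - 1 / (r * κ l)) ^ t *
        (calL w0 - Lstar) := by
  
  -- Notation
  have hneL : (Finset.univ : Finset (Fin L)).Nonempty := Finset.univ_nonempty_iff.mpr ⟨⟨0, hL⟩⟩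
  have hne : ∀ l : Fin L, (Finset.univ : Finset (Fin (dl l))).Nonempty :=
    fun l => Finset.univ_nonempty_iff.mpr ⟨⟨0, hdl l⟩⟩
  set HH : Matrix ((l : Fin L) × Fin (dl l)) ((l : Fin L) × Fin (dl l)) ℝ :=
    Matrix.blockDiagonal' Hl with hHH
  set lamd : Fin L → ℝ := fun l => Finset.univ.inf' (hne l) (hHl l).eigenvalues with hlamd
  -- basic eigenvalue facts
  have hlamd_pos : ∀ l, 0 < lamd l := by
    intro l
    rw [hlamd]
    exact (Finset.lt_inf'_iff _).mpr fun i _ => (hpos l).eigenvalues_pos i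
  have hev_le : ∀ l i, (hHl l).eigenvalues i ≤ lam1 l := by
    intro l i
    rw [hlam1 l]
    exact Finset.le_sup' _ (Finset.mem_univ i)
  have hev_ge : ∀ l i, lamd l ≤ (hHl l).eigenvalues i := by
    intro l i
    exact Finset.inf'_le _ (Finset.mem_univ i)
  have hev_pos : ∀ l i, (0:ℝ) < (hHl l).eigenvalues i := fun l i => (hpos l).eigenvalues_pos i
  have hlam1_pos : ∀ l, 0 < lam1 l := fun l =>
    lt_of_lt_of_le (hlamd_pos l) (le_trans (hev_ge l ⟨0, hdl l⟩) (hev_le l ⟨0, hdl l⟩))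
  have hlamd_le_lam1 : ∀ l, lamd l ≤ lam1 l := fun l =>
    le_trans (hev_ge l ⟨0, hdl l⟩) (hev_le l ⟨0, hdl l⟩)
  have hκ_eq : ∀ l, κ l = lam1 l / lamd l := fun l => hκ l
  have hκ_pos : ∀ l, 0 < κ l := by
    intro l; rw [hκ_eq l]; exact div_pos (hlam1_pos l) (hlamd_pos l)
  have hκ_ge1 : ∀ l, 1 ≤ κ l := by
    intro l; rw [hκ_eq l]
    exact (one_le_div (hlamd_pos l)).mpr (hlamd_le_lam1 l)
  -- block decomposition of quadratic forms
  have quadBlock : ∀ u v : ((l : Fin L) × Fin (dl l)) → ℝ,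
      u ⬝ᵥ (HH *ᵥ v) = ∑ l, (fun j => u ⟨l, j⟩) ⬝ᵥ (Hl l *ᵥ fun j => v ⟨l, j⟩) := by
    intro u v
    rw [adam_dot_sigma u (HH *ᵥ v)]
    refine Finset.sum_congr rfl fun l _ => ?_
    congr 1
    funext j
    exact adam_blockDiagonal'_mulVec_apply Hl v l j
  have hPSD : ∀ v : ((l : Fin L) × Fin (dl l)) → ℝ, 0 ≤ v ⬝ᵥ (HH *ᵥ v) := by
    intro v
    rw [quadBlock]
    exact Finset.sum_nonneg fun l _ =>
      adam_quad_nonneg (Hl l) (hHl l) (fun i => (hev_pos l i).le) _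
  -- symmetry
  have hsymm : ∀ u v : ((l : Fin L) × Fin (dl l)) → ℝ, u ⬝ᵥ (HH *ᵥ v) = v ⬝ᵥ (HH *ᵥ u) := by
    intro u v
    have hT : HHᵀ = HH := by
      rw [hHH, blockDiagonal'_transpose]
      have he : (fun k => (Hl k)ᵀ) = Hl := by
        funext l
        have := hHl l
        rwa [Matrix.IsHermitian, conjTranspose_eq_transpose_of_trivial] at this
      rw [he]
    rw [dotProduct_mulVec, ← mulVec_transpose, hT, dotProduct_comm]
  -- the minimizer
  set wstar : ((l : Fin L) × Fin (dl l)) → ℝ :=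
    fun q => ((Hl q.1)⁻¹ *ᵥ fun j => h ⟨q.1, j⟩) q.2 with hwstar
  have hws : HH *ᵥ wstar = h := by
    funext q
    obtain ⟨l, i⟩ := q
    rw [hHH, adam_blockDiagonal'_mulVec_apply]
    have : (fun j => wstar ⟨l, j⟩) = (Hl l)⁻¹ *ᵥ fun j => h ⟨l, j⟩ := rfl
    rw [this, mulVec_mulVec, Matrix.mul_nonsing_inv _ ((hpos l).det_pos.ne'.isUnit), one_mulVec]
  -- energy identity
  have expand : ∀ u v : ((l : Fin L) × Fin (dl l)) → ℝ,
      (u - v) ⬝ᵥ (HH *ᵥ (u - v)) =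
        u ⬝ᵥ (HH *ᵥ u) - 2 * (u ⬝ᵥ (HH *ᵥ v)) + v ⬝ᵥ (HH *ᵥ v) := by
    intro u v
    rw [mulVec_sub, dotProduct_sub, sub_dotProduct, sub_dotProduct,
      hsymm v u]
    ring
  have energy : ∀ u, calL u - calL wstar = (1/2) * ((u - wstar) ⬝ᵥ (HH *ᵥ (u - wstar))) := by
    intro u
    rw [expand u wstar, hws, hcalL, hcalL]
    have h1 : wstar ⬝ᵥ h = h ⬝ᵥ wstar := dotProduct_comm _ _
    have h2 : u ⬝ᵥ h = h ⬝ᵥ u := dotProduct_comm _ _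
    rw [hws] at *
    ring_nf
    rw [hws]
    linarith [h1, h2]
  -- Lstar = calL wstar
  have hlower : ∀ u, calL wstar ≤ calL u := by
    intro u
    have := hPSD (u - wstar)
    have he := energy u
    linarith
  have hLs : Lstar = calL wstar := by
    rw [hLstar]
    apply le_antisymm
    · exact ciInf_le ⟨calL wstar, by rintro x ⟨u, rfl⟩; exact hlower u⟩ wstar
    · exact le_ciInf hlower

  -- coordinate bounds on |g0|
  have hg0_pos : ∀ q : ((l : Fin L) × Fin (dl l)), 0 < |g0 q| := fun q => abs_pos.mpr (hg0ne q)
  have hg0_ge : ∀ (l : Fin L) (i : Fin (dl l)), C1 l * lam1 l ≤ |g0 ⟨l, i⟩| := by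
    intro l i
    have h1 : C1 l ≤ |g0 ⟨l, i⟩| / lam1 l := by
      rw [hC1 l]; exact Finset.inf'_le _ (Finset.mem_univ i)
    have h2 := mul_le_mul_of_nonneg_right h1 (hlam1_pos l).le
    rwa [div_mul_cancel₀ _ (hlam1_pos l).ne'] at h2
  have hg0_le : ∀ (l : Fin L) (i : Fin (dl l)), |g0 ⟨l, i⟩| ≤ C2 l * lam1 l := by
    intro l i
    have h1 : |g0 ⟨l, i⟩| / lam1 l ≤ C2 l := by
      rw [hC2 l]
      exact Finset.le_sup' (fun i : Fin (dl l) => |g0 ⟨l, i⟩| / lam1 l) (Finset.mem_univ i)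
    have h2 := mul_le_mul_of_nonneg_right h1 (hlam1_pos l).le
    rwa [div_mul_cancel₀ _ (hlam1_pos l).ne'] at h2
  have hC1_pos : ∀ l, 0 < C1 l := by
    intro l
    rw [hC1 l]
    exact (Finset.lt_inf'_iff _).mpr fun i _ => div_pos (hg0_pos ⟨l, i⟩) (hlam1_pos l)
  have hC1_le_C2 : ∀ l, C1 l ≤ C2 l := by
    intro l
    calc C1 l ≤ |g0 ⟨l, ⟨0, hdl l⟩⟩| / lam1 l := by
          rw [hC1 l]; exact Finset.inf'_le _ (Finset.mem_univ _)
      _ ≤ C2 l := by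
          rw [hC2 l]
          exact Finset.le_sup' (fun i : Fin (dl l) => |g0 ⟨l, i⟩| / lam1 l) (Finset.mem_univ _)
  have hC2_pos : ∀ l, 0 < C2 l := fun l => lt_of_lt_of_le (hC1_pos l) (hC1_le_C2 l)
  set minC1sq : ℝ := Finset.univ.inf' hneL (fun l => (C1 l) ^ 2) with hminC1sq
  set maxC2sq : ℝ := Finset.univ.sup' hneL (fun l => (C2 l) ^ 2) with hmaxC2sq
  have hr_eq : r = maxC2sq / minC1sq := hr
  have hminC1sq_pos : 0 < minC1sq :=
    (Finset.lt_inf'_iff _).mpr fun l _ => pow_pos (hC1_pos l) 2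
  have hminC1sq_le : ∀ l, minC1sq ≤ (C1 l) ^ 2 :=
    fun l => Finset.inf'_le _ (Finset.mem_univ l)
  have hmax_ge : ∀ l, (C2 l) ^ 2 ≤ maxC2sq := fun l => by
    rw [hmaxC2sq]; exact Finset.le_sup' (fun l => (C2 l) ^ 2) (Finset.mem_univ l)
  have hη_pos : 0 < η := by
    rw [hη]; exact (Finset.lt_inf'_iff _).mpr fun l _ => hC1_pos l
  have hη_le : ∀ l, η ≤ C1 l := by
    intro l; rw [hη]; exact Finset.inf'_le _ (Finset.mem_univ l)
  have hr1 : 1 ≤ r := by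
    obtain ⟨l1, _, hl1⟩ := Finset.exists_mem_eq_inf' hneL (fun l => (C1 l) ^ 2)
    rw [hr_eq]
    rw [one_le_div hminC1sq_pos]
    calc minC1sq = (C1 l1) ^ 2 := hl1
      _ ≤ (C2 l1) ^ 2 := by
          have := hC1_le_C2 l1
          nlinarith [hC1_pos l1]
      _ ≤ maxC2sq := hmax_ge l1
  have hr_pos : 0 < r := lt_of_lt_of_le one_pos hr1
  have hkey : ∀ l, C2 l ≤ η * r := by
    intro l
    have hη_le_C2 : η ≤ C2 l := le_trans (hη_le l) (hC1_le_C2 l)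
    have hηsq : minC1sq ≤ η * η := by
      obtain ⟨l2, _, hl2⟩ := Finset.exists_mem_eq_inf' hneL C1
      have hηeq2 : η = C1 l2 := by rw [hη, hl2]
      have h3 := hminC1sq_le l2
      rw [← hηeq2] at h3
      nlinarith [h3]
    -- C2 l * minC1sq ≤ η * maxC2sq
    have hmain : C2 l * minC1sq ≤ η * maxC2sq := by
      calc C2 l * minC1sq ≤ C2 l * (η * η) := by
            exact mul_le_mul_of_nonneg_left hηsq (hC2_pos l).le
        _ = η * (C2 l * η) := by ring
        _ ≤ η * (C2 l * C2 l) := by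
            exact mul_le_mul_of_nonneg_left
              (mul_le_mul_of_nonneg_left hη_le_C2 (hC2_pos l).le) hη_pos.le
        _ ≤ η * maxC2sq := by
            refine mul_le_mul_of_nonneg_left ?_ hη_pos.le
            have := hmax_ge l
            nlinarith
    rw [hr_eq, mul_div_assoc']
    rw [le_div_iff₀ hminC1sq_pos]
    linarith [hmain]

  -- contraction constants
  set c : ℝ := Finset.univ.inf' hneL (fun l => 1 / (r * κ l)) with hcdef
  set ρ : ℝ := Finset.univ.sup' (Finset.univ_nonempty_iff.mpr ⟨⟨0, hL⟩⟩)
    (fun l => 1 - 1 / (r * κ l)) with hρdef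
  have hrκ_pos : ∀ l, 0 < r * κ l := fun l => mul_pos hr_pos (hκ_pos l)
  have hrκ_ge1 : ∀ l, 1 ≤ r * κ l := by
    intro l
    have := hκ_ge1 l
    nlinarith [hr1]
  have hc_le : ∀ l, c ≤ 1 / (r * κ l) := by
    intro l; rw [hcdef]; exact Finset.inf'_le _ (Finset.mem_univ l)
  have hc_pos : 0 < c := by
    rw [hcdef]
    exact (Finset.lt_inf'_iff _).mpr fun l _ => by
      exact div_pos one_pos (hrκ_pos l)
  have hρ_ge : ∀ l, 1 - 1 / (r * κ l) ≤ ρ := by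
    intro l; rw [hρdef]; exact Finset.le_sup' (fun l => 1 - 1 / (r * κ l)) (Finset.mem_univ l)
  have hρ_nonneg : 0 ≤ ρ := by
    refine le_trans ?_ (hρ_ge ⟨0, hL⟩)
    have h1 := hrκ_ge1 ⟨0, hL⟩
    have h2 : 1 / (r * κ ⟨0, hL⟩) ≤ 1 := by
      rw [div_le_one (hrκ_pos ⟨0, hL⟩)]; exact h1
    linarith
  have h1c_le_ρ : 1 - c ≤ ρ := by
    obtain ⟨l0, _, hl0⟩ := Finset.exists_mem_eq_inf' hneL (fun l => 1 / (r * κ l))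
    have : c = 1 / (r * κ l0) := by rw [hcdef, hl0]
    rw [this]
    exact hρ_ge l0
  -- the one-step contraction
  have step : ∀ t, calL (w (t + 1)) - calL wstar ≤ ρ * (calL (w t) - calL wstar) := by
    intro t
    set e : ((l : Fin L) × Fin (dl l)) → ℝ := w t - wstar with he
    set g : ((l : Fin L) × Fin (dl l)) → ℝ := HH *ᵥ e with hg
    have hgw : HH *ᵥ w t - h = g := by rw [hg, he, mulVec_sub, hws]
    set v : ((l : Fin L) × Fin (dl l)) → ℝ := fun q => (η * |g0 q|⁻¹) * g q with hv
    clear_value v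
    clear_value g
    clear_value e
    have hDinv : (Matrix.diagonal fun i => |g0 i|)⁻¹
        = Matrix.diagonal fun i : ((l : Fin L) × Fin (dl l)) => |g0 i|⁻¹ := by
      apply Matrix.inv_eq_right_inv
      rw [Matrix.diagonal_mul_diagonal]
      have hone : (fun i : ((l : Fin L) × Fin (dl l)) => |g0 i| * |g0 i|⁻¹)
          = fun _ => (1:ℝ) := by
        funext i
        exact mul_inv_cancel₀ (hg0_pos i).ne'
      rw [hone, Matrix.diagonal_one]
    have hwt1 : w (t + 1) - wstar = e - v := by
      rw [hrec t, hgw, hDinv]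
      funext q
      simp only [Pi.sub_apply, Pi.smul_apply, smul_eq_mul, mulVec_diagonal, hv, he]
      ring
    -- energy identity for the step
    have hstep : calL (w (t + 1)) - calL wstar =
        (calL (w t) - calL wstar) - v ⬝ᵥ g + (1 / 2) * (v ⬝ᵥ (HH *ᵥ v)) := by
      rw [energy (w (t + 1)), energy (w t), hwt1, ← he, expand e v, hsymm e v, ← hg]
      ring
    -- upper bound on the curvature term
    have hb1 : v ⬝ᵥ (HH *ᵥ v) ≤ v ⬝ᵥ g := by
      have h1 : v ⬝ᵥ (HH *ᵥ v) ≤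
          ∑ l, lam1 l * ((fun j => v ⟨l, j⟩) ⬝ᵥ (fun j => v ⟨l, j⟩)) := by
        rw [quadBlock]
        exact Finset.sum_le_sum fun l _ =>
          adam_quad_le_sup (Hl l) (hHl l) (lam1 l) (hev_le l) _
      refine le_trans h1 ?_
      rw [adam_dot_sigma v g]
      refine Finset.sum_le_sum fun l _ => ?_
      simp only [dotProduct]
      rw [Finset.mul_sum]
      refine Finset.sum_le_sum fun i _ => ?_
      have hq1 : C1 l * lam1 l ≤ |g0 ⟨l, i⟩| := hg0_ge l i
      have hq2 : 0 < |g0 ⟨l, i⟩| := hg0_pos _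
      have hηl : η ≤ C1 l := hη_le l
      have hinv : |g0 ⟨l, i⟩| * |g0 ⟨l, i⟩|⁻¹ = 1 := mul_inv_cancel₀ hq2.ne'
      have hinv_pos : 0 < |g0 ⟨l, i⟩|⁻¹ := inv_pos.mpr hq2
      have hls : lam1 l * (η * |g0 ⟨l, i⟩|⁻¹) ≤ 1 := by
        have h2 : lam1 l * η ≤ |g0 ⟨l, i⟩| := by nlinarith [hlam1_pos l]
        calc lam1 l * (η * |g0 ⟨l, i⟩|⁻¹) = (lam1 l * η) * |g0 ⟨l, i⟩|⁻¹ := by ring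
          _ ≤ |g0 ⟨l, i⟩| * |g0 ⟨l, i⟩|⁻¹ := mul_le_mul_of_nonneg_right h2 hinv_pos.le
          _ = 1 := hinv
      have hs_nonneg : 0 ≤ η * |g0 ⟨l, i⟩|⁻¹ := by positivity
      simp only [hv]
      exact adam_scalar1 hls hs_nonneg
    -- lower bound on the decrease term
    have hb2 : c * (e ⬝ᵥ (HH *ᵥ e)) ≤ v ⬝ᵥ g := by
      have h1 : e ⬝ᵥ (HH *ᵥ e) ≤
          ∑ l, (lamd l)⁻¹ * ((fun j => g ⟨l, j⟩) ⬝ᵥ (fun j => g ⟨l, j⟩)) := by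
        rw [quadBlock]
        refine Finset.sum_le_sum fun l _ => ?_
        have hblk : (Hl l *ᵥ fun j => e ⟨l, j⟩) = fun j => g ⟨l, j⟩ := by
          funext j
          rw [hg, hHH]
          exact (adam_blockDiagonal'_mulVec_apply Hl e l j).symm
        have hq := adam_quad_le_gradsq (Hl l) (hHl l) (lamd l) (hlamd_pos l)
          (hev_ge l) (fun j => e ⟨l, j⟩)
        rw [← hblk, le_inv_mul_iff₀ (hlamd_pos l)]
        exact hq
      have h2 : c * (e ⬝ᵥ (HH *ᵥ e)) ≤
          c * ∑ l, (lamd l)⁻¹ * ((fun j => g ⟨l, j⟩) ⬝ᵥ (fun j => g ⟨l, j⟩)) :=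
        mul_le_mul_of_nonneg_left h1 hc_pos.le
      refine le_trans h2 ?_
      rw [adam_dot_sigma v g, Finset.mul_sum]
      refine Finset.sum_le_sum fun l _ => ?_
      simp only [dotProduct]
      rw [Finset.mul_sum, Finset.mul_sum]
      refine Finset.sum_le_sum fun i _ => ?_
      have hq2 : 0 < |g0 ⟨l, i⟩| := hg0_pos _
      have hpoint : c * (lamd l)⁻¹ ≤ η * |g0 ⟨l, i⟩|⁻¹ := by
        have ha : |g0 ⟨l, i⟩| ≤ C2 l * lam1 l := hg0_le l i
        have hc1 : c ≤ 1 / (r * κ l) := hc_le l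
        have hC2η : C2 l ≤ η * r := hkey l
        have hmain : c * |g0 ⟨l, i⟩| ≤ η * lamd l := by
          have h3 : (1 / (r * κ l)) * (C2 l * lam1 l) = C2 l * lamd l / r := by
            have hne1 : r ≠ 0 := hr_pos.ne'
            have hne2 : lamd l ≠ 0 := (hlamd_pos l).ne'
            have hne3 : lam1 l ≠ 0 := (hlam1_pos l).ne'
            rw [hκ_eq l]
            field_simp
          have h4 : c * |g0 ⟨l, i⟩| ≤ (1 / (r * κ l)) * (C2 l * lam1 l) := by
            exact mul_le_mul hc1 ha hq2.le (le_of_lt (div_pos one_pos (hrκ_pos l)))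
          rw [h3] at h4
          refine le_trans h4 ?_
          rw [div_le_iff₀ hr_pos]
          calc C2 l * lamd l ≤ (η * r) * lamd l :=
                mul_le_mul_of_nonneg_right hC2η (hlamd_pos l).le
            _ = η * lamd l * r := by ring
        rw [show c * (lamd l)⁻¹ = c / lamd l from by ring,
          show η * |g0 ⟨l, i⟩|⁻¹ = η / |g0 ⟨l, i⟩| from by ring,
          div_le_div_iff₀ (hlamd_pos l) hq2]
        linarith [hmain]
      simp only [hv]
      have hgg : (0:ℝ) ≤ g ⟨l, i⟩ * g ⟨l, i⟩ := mul_self_nonneg _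
      calc c * ((lamd l)⁻¹ * (g ⟨l, i⟩ * g ⟨l, i⟩))
          = (c * (lamd l)⁻¹) * (g ⟨l, i⟩ * g ⟨l, i⟩) := by ring
        _ ≤ (η * |g0 ⟨l, i⟩|⁻¹) * (g ⟨l, i⟩ * g ⟨l, i⟩) :=
            mul_le_mul_of_nonneg_right hpoint hgg
        _ = η * |g0 ⟨l, i⟩|⁻¹ * g ⟨l, i⟩ * g ⟨l, i⟩ := by ring
    -- put everything together
    have hft : calL (w t) - calL wstar = (1 / 2) * (e ⬝ᵥ (HH *ᵥ e)) := by
      rw [energy (w t), ← he]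
    have hfnn : 0 ≤ calL (w t) - calL wstar := by
      rw [hft]; linarith [hPSD e]
    have hprod := mul_le_mul_of_nonneg_right h1c_le_ρ hfnn
    have hcE : c * (e ⬝ᵥ (HH *ᵥ e)) = 2 * (c * (calL (w t) - calL wstar)) := by
      rw [hft]; ring
    linarith only [hstep, hb1, hb2, hprod, hcE, hfnn, hft, hc_pos.le]
  -- final induction
  have main : ∀ t, calL (w t) - calL wstar ≤ ρ ^ t * (calL w0 - calL wstar) := by
    intro t
    induction t with
    | zero => rw [hw0]; simp
    | succ t ih =>
      have h1 := step t
      have h2 : ρ * (calL (w t) - calL wstar) ≤ ρ * (ρ ^ t * (calL w0 - calL wstar)) :=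
        mul_le_mul_of_nonneg_left ih hρ_nonneg
      calc calL (w (t + 1)) - calL wstar ≤ ρ * (ρ ^ t * (calL w0 - calL wstar)) :=
            le_trans h1 h2
        _ = ρ ^ (t + 1) * (calL w0 - calL wstar) := by ring
  intro t
  rw [hLs]
  exact main t
end

section
/- Fix β₂ ∈ (0,1) and η > 0, and consider the one-dimensional loss ℒ(w) = ½w² (so ℒ* = 0). Define the constant-learning-rate Adam dynamics with β₁ = 0, ε = 0: v⁰ = (w⁰)², and for t ≥ 1, v^t = β₂·v^{t−1} + (1−β₂)·(w^t)², with w^{t+1} = w^t − η·w^t/√(v^t). Then the initialization w⁰ = η/2 yields a discrete limit cycle: for every natural number t, w^t = (−1)^t·η/2 and v^t = η²/4; in particular liminf_{t→∞} (ℒ(w^t) − ℒ*) = η²/8 > 0, so Adam with β₂ < 1 and constant learning rate does not converge. -/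
open Filter

/-- Proposition 3 of the paper: Fix `β₂ ∈ (0,1)` and `η > 0`, and consider
constant-learning-rate Adam with `β₁ = 0`, `ε = 0` on `ℒ(w) = ½w²` (so `ℒ* = 0`):
`v⁰ = (w⁰)²`, `w^{t+1} = w^t − η·w^t/√(v^t)`, `v^{t+1} = β₂·v^t + (1−β₂)·(w^{t+1})²`.
Then the initialization `w⁰ = η/2` yields a discrete limit cycle: `w^t = (−1)^t·η/2` and
`v^t = η²/4` for all `t`; in particular `liminf_{t→∞} (ℒ(w^t) − ℒ*) = η²/8 > 0`, so Adam
with `β₂ < 1` and constant learning rate does not converge. -/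
theorem adam_beta2_lt_one_limit_cycle
    (β₂ η : ℝ) (hβ₂0 : 0 < β₂) (hβ₂1 : β₂ < 1) (hη : 0 < η)
    (w v : ℕ → ℝ)
    (hw0 : w 0 = η / 2) (hv0 : v 0 = (w 0) ^ 2)
    (hwrec : ∀ t, w (t + 1) = w t - η * w t / Real.sqrt (v t))
    (hvrec : ∀ t, v (t + 1) = β₂ * v t + (1 - β₂) * (w (t + 1)) ^ 2) :
    (∀ t : ℕ, w t = (-1) ^ t * (η / 2) ∧ v t = η ^ 2 / 4) ∧
      (atTop.liminf (fun t => (1 / 2) * (w t) ^ 2 - 0) = η ^ 2 / 8 ∧ (0 : ℝ) < η ^ 2 / 8) := by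
  have hsq : Real.sqrt (η ^ 2 / 4) = η / 2 := by
    rw [show η ^ 2 / 4 = (η / 2) ^ 2 by ring, Real.sqrt_sq (by linarith)]
  have key : ∀ t : ℕ, w t = (-1) ^ t * (η / 2) ∧ v t = η ^ 2 / 4 := by
    intro t
    induction t with
    | zero =>
      refine ⟨by simpa using hw0, ?_⟩
      rw [hv0, hw0]; ring
    | succ n ih =>
      obtain ⟨hwn, hvn⟩ := ih
      have hw' : w (n + 1) = (-1) ^ (n + 1) * (η / 2) := by
        rw [hwrec n, hvn, hsq, hwn]
        field_simp
        ring
      refine ⟨hw', ?_⟩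
      rw [hvrec n, hvn, hw']
      have : ((-1 : ℝ) ^ (n + 1)) ^ 2 = 1 := by
        rw [← pow_mul, mul_comm, pow_mul]; norm_num
      rw [mul_pow, this]
      ring
  refine ⟨key, ?_, by positivity⟩
  have heq : (fun t => (1 / 2 : ℝ) * (w t) ^ 2 - 0) = fun _ => η ^ 2 / 8 := by
    funext t
    have := (key t).1
    rw [this, mul_pow]
    have : ((-1 : ℝ) ^ t) ^ 2 = 1 := by
      rw [← pow_mul, mul_comm, pow_mul]; norm_num
    rw [this]; ring
  rw [heq, liminf_const]
end
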